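/- Let q > p₀ > p₁ > ... > p_k > p_{k+1} > 0 be real numbers, let r₀,...,r_k, M, ε > 0, and let u be a finite sequence of reals with ∑ₙ |u(n)|^{p_i} < r_i for all i = 0,...,k. Then there exists a nonempty finite sequence v of nonnegative reals such that ∑ₙ v(n)^q < ε, ∑ₙ |(u⌢v)(n)|^{p_i} < r_i for all i = 0,...,k, and ∑ₙ |(u⌢v)(n)|^{p_{k+1}} > M. -/

import Mathlib

/-!
Spread a mass `a > M` evenly over `N` equal entries `c = (a / N)^(1/s)` with `s = p (k+1)`:
then `∑ v(n)^s = a` exactly, while for every `e > s` the sum `∑ v(n)^e = a^(e/s) N^(1 - e/s)`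
tends to `0` as `N → ∞`. Taking `N` large makes the `q`- and `p i`-sums (`i ≤ k`) of `v`
as small as needed, and appending `v` to `u` pushes the `p (k+1)`-sum above `M`.
-/

open Filter Topology

/-- For a finite real sequence `w` (a list) and exponent `p`, `∑ₙ |w(n)|^p`. -/
noncomputable def psum (p : ℝ) (w : List ℝ) : ℝ := (w.map fun t => |t| ^ p).sum

theorem psum_nonneg (e : ℝ) (w : List ℝ) : 0 ≤ psum e w :=
  List.sum_nonneg fun _ hx => by
    obtain ⟨t, -, rfl⟩ := List.mem_map.mp hx
    positivity

theorem psum_append (e : ℝ) (u v : List ℝ) : psum e (u ++ v) = psum e u + psum e v := by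
  simp [psum]

theorem psum_replicate (e : ℝ) {c : ℝ} (hc : 0 ≤ c) (N : ℕ) :
    psum e (List.replicate N c) = N * c ^ e := by
  simp [psum, List.map_replicate, List.sum_replicate, abs_of_nonneg hc, nsmul_eq_mul]

noncomputable def evenSplit (a s : ℝ) (N : ℕ) : List ℝ :=
  List.replicate N ((a / N) ^ s⁻¹)

theorem evenSplit_ne_nil (a s : ℝ) {N : ℕ} (hN : N ≠ 0) : evenSplit a s N ≠ [] := by
  simpa [evenSplit] using hN

theorem nonneg_of_mem_evenSplit {a s : ℝ} (ha : 0 ≤ a) {N : ℕ} {t : ℝ}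
    (ht : t ∈ evenSplit a s N) : 0 ≤ t := by
  rw [List.eq_of_mem_replicate ht]
  positivity

theorem psum_evenSplit (a s e : ℝ) (ha : 0 ≤ a) (N : ℕ) :
    psum e (evenSplit a s N) = N * (a / N) ^ (e / s) := by
  rw [evenSplit, psum_replicate e (by positivity), ← Real.rpow_mul (by positivity),
    inv_mul_eq_div]

theorem psum_evenSplit_self {a s : ℝ} (ha : 0 ≤ a) (hs : s ≠ 0) {N : ℕ} (hN : N ≠ 0) :
    psum s (evenSplit a s N) = a := by
  rw [psum_evenSplit a s s ha, div_self hs, Real.rpow_one]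
  field_simp

theorem tendsto_psum_evenSplit {a s e : ℝ} (ha : 0 ≤ a) (hs : 0 < s) (hse : s < e) :
    Tendsto (fun N : ℕ => psum e (evenSplit a s N)) atTop (𝓝 0) := by
  have hexp : 0 < e / s - 1 := by rw [sub_pos, one_lt_div hs]; exact hse
  have hpow : Tendsto (fun N : ℕ => a ^ (e / s) * (N : ℝ) ^ (-(e / s - 1))) atTop (𝓝 0) := by
    simpa using ((tendsto_rpow_neg_atTop hexp).comp tendsto_natCast_atTop_atTop).const_mul
      (a ^ (e / s))
  refine hpow.congr' ((eventually_ne_atTop 0).mono fun N hN => ?_)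
  have hN' : (0 : ℝ) < N := by positivity
  change _ = psum e (evenSplit a s N)
  rw [psum_evenSplit a s e ha, Real.div_rpow ha hN'.le, neg_sub, Real.rpow_sub hN',
    Real.rpow_one]
  ring

theorem extension_claim_general (k : ℕ) (q : ℝ) (p : Fin (k + 2) → ℝ)
    (hq : p 0 < q) (hanti : StrictAnti p) (hpos : 0 < p (Fin.last (k + 1)))
    (r : Fin (k + 1) → ℝ) (M ε : ℝ) (hM : 0 < M) (hε : 0 < ε)
    (u : List ℝ) (hu : ∀ i : Fin (k + 1), psum (p i.castSucc) u < r i) :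
    ∃ v : List ℝ, v ≠ [] ∧ (∀ t ∈ v, (0:ℝ) ≤ t) ∧
      psum q v < ε ∧
      (∀ i : Fin (k + 1), psum (p i.castSucc) (u ++ v) < r i) ∧
      M < psum (p (Fin.last (k + 1))) (u ++ v) := by
  set s := p (Fin.last (k + 1))
  have hs_lt : ∀ i : Fin (k + 1), s < p i.castSucc := fun i => hanti (Fin.castSucc_lt_last i)
  have hsq : s < q := (hs_lt 0).trans hq
  have ha : 0 ≤ M + 1 := by linarith
  have hsmall : ∀ᶠ N in atTop, N ≠ 0 ∧ psum q (evenSplit (M + 1) s N) < ε ∧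
      ∀ i : Fin (k + 1),
        psum (p i.castSucc) (evenSplit (M + 1) s N) < r i - psum (p i.castSucc) u :=
    (eventually_ne_atTop 0).and <|
      ((tendsto_psum_evenSplit ha hpos hsq).eventually_lt_const hε).and <|
        eventually_all.mpr fun i =>
          (tendsto_psum_evenSplit ha hpos (hs_lt i)).eventually_lt_const (sub_pos.mpr (hu i))
  obtain ⟨N, hN, hq_small, hp_small⟩ := hsmall.exists
  refine ⟨evenSplit (M + 1) s N, evenSplit_ne_nil _ _ hN, fun t => nonneg_of_mem_evenSplit ha,
    hq_small, fun i => ?_, ?_⟩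
  · rw [psum_append]
    linarith [hp_small i]
  · rw [psum_append, psum_evenSplit_self ha hpos.ne' hN]
    linarith [psum_nonneg s u]

/-- The extension claim: if `q > p 0 > p 1 > ⋯ > p (k+1) > 0`, `r_i, M, ε > 0` and
`u` is a finite real sequence with `∑ |u(n)|^{p i} < r i` for `i ≤ k`, then there is a
nonempty finite sequence `v` of nonnegative reals with `∑ v(n)^q < ε`,
`∑ |(u⌢v)(n)|^{p i} < r i` for `i ≤ k`, and `∑ |(u⌢v)(n)|^{p (k+1)} > M`. -/
theorem extension_claim (k : ℕ) (q : ℝ) (p : Fin (k + 2) → ℝ)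
    (hq : p 0 < q) (hanti : StrictAnti p) (hpos : 0 < p (Fin.last (k + 1)))
    (r : Fin (k + 1) → ℝ) (hr : ∀ i, 0 < r i) (M ε : ℝ) (hM : 0 < M) (hε : 0 < ε)
    (u : List ℝ) (hu : ∀ i : Fin (k + 1), psum (p i.castSucc) u < r i) :
    ∃ v : List ℝ, v ≠ [] ∧ (∀ t ∈ v, (0:ℝ) ≤ t) ∧
      psum q v < ε ∧
      (∀ i : Fin (k + 1), psum (p i.castSucc) (u ++ v) < r i) ∧
      M < psum (p (Fin.last (k + 1))) (u ++ v) :=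
  extension_claim_general k q p hq hanti hpos r M ε hM hε u hu
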